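/- For the boundary action of the free group 𝔽_r on (∂𝔽, ν): if g = t₁⋯t_n is in reduced form and k ≤ n is the largest number such that ξ_i⁻¹ = t_{n+1−i} for all i ≤ k, then the Radon–Nikodym derivative satisfies (d(ν∘g)/dν)(ξ) = (2r−1)^{2k−n}. In particular, setting λ = (2r−1)⁻¹, the cocycle R_λ(g,ξ) = 2k−n is integer valued. -/

import Mathlib

open MeasureTheory

/-- The symmetric generating set of the free group 𝔽_r, modelled as `Fin r × Bool`. -/
abbrev FGen (r : ℕ) := Fin r × Bool

/-- Formal inverse of a generator: `(i,b)⁻¹ = (i,!b)`. -/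
def invGen {r : ℕ} (s : FGen r) : FGen r := (s.1, !s.2)

/-- The boundary ∂𝔽 of the free group: infinite reduced words in the generators. -/
def FBoundary (r : ℕ) := {ξ : ℕ → FGen r // ∀ i, ξ (i + 1) ≠ invGen (ξ i)}

instance (r : ℕ) : MeasurableSpace (FBoundary r) :=
  Subtype.instMeasurableSpace

/-- The cylinder of boundary points starting with the first `m` letters of `w`. -/
def fcyl {r : ℕ} (m : ℕ) (w : ℕ → FGen r) : Set (FBoundary r) :=
  {ξ | ∀ i, i < m → ξ.1 i = w i}

/-- `w` is a reduced word on the first `n` letters. -/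
def FReduced {r : ℕ} (n : ℕ) (w : ℕ → FGen r) : Prop :=
  ∀ i, i + 1 < n → w (i + 1) ≠ invGen (w i)

/-! Let `S` be the set of boundary points against which `w` cancels exactly `k` letters. On `S`,
`g` deletes the first `k` letters and prepends the `n - k` surviving letters of `w`, so it maps
every cylinder of length `m > k` inside `S` onto a cylinder of length `m - k + (n - k)`: by the
cylinder masses of `ν`, the measure `ν ∘ g` of such a cylinder is `(2r-1)^(2k-n)` times its
`ν`-measure. Every set that depends only on finitely many letters, in particular every measurable
cylinder of the product σ-algebra, meets `S` in a finite disjoint union of such cylinders, so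
`ν ∘ g` and `(2r-1)^(2k-n) • ν` agree on `S`, and the Radon–Nikodym derivative is this
constant on `S`. -/

open scoped NNReal ENNReal

theorem MeasureTheory.measure_eq_mul_of_preimage_image_eq {α β : Type*} [MeasurableSpace α]
    [Finite β] {μ ν : Measure α} {c : ℝ≥0∞} {π : α → β}
    (hπ : ∀ b, MeasurableSet (π ⁻¹' {b})) {T : Set α} (hT : π ⁻¹' (π '' T) = T)
    (h : ∀ x ∈ T, μ (π ⁻¹' {π x}) = c * ν (π ⁻¹' {π x})) : μ T = c * ν T := by
  set s := (Set.toFinite (π '' T)).toFinset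
  have hs : π ⁻¹' ↑s = T := by simpa [s] using hT
  rw [← hs, ← sum_measure_preimage_singleton s fun b _ => hπ b,
    ← sum_measure_preimage_singleton s fun b _ => hπ b, Finset.mul_sum]
  refine Finset.sum_congr rfl fun b hb => ?_
  obtain ⟨x, hx, rfl⟩ := (Set.Finite.mem_toFinset _).1 hb
  exact h x hx

theorem MeasureTheory.Measure.rnDeriv_eq_of_restrict_eq_smul {α : Type*} [MeasurableSpace α]
    {μ ν : Measure α} [IsFiniteMeasure μ] [IsFiniteMeasure ν] {s : Set α} (hs : MeasurableSet s)
    {c : ℝ≥0} (h : μ.restrict s = (c • ν).restrict s) :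
    ∀ᵐ x ∂ν, x ∈ s → μ.rnDeriv ν x = c := by
  have hμ : s.indicator (μ.rnDeriv ν) =ᵐ[ν] c • s.indicator 1 := calc
    s.indicator (μ.rnDeriv ν) =ᵐ[ν] (μ.restrict s).rnDeriv ν :=
      (Measure.rnDeriv_restrict μ ν hs).symm
    _ = (c • ν.restrict s).rnDeriv ν := by rw [h, Measure.restrict_smul]
    _ =ᵐ[ν] c • (ν.restrict s).rnDeriv ν := Measure.rnDeriv_smul_left _ _ c
    _ =ᵐ[ν] c • s.indicator 1 := (Measure.rnDeriv_restrict_self ν hs).const_smul c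
  filter_upwards [hμ] with x hx hxs
  simpa [Set.indicator_of_mem hxs, ENNReal.smul_def] using hx

namespace FBoundary

variable {r : ℕ}

def take (N : ℕ) (ξ : FBoundary r) : Fin N → FGen r := fun i => ξ.1 i

theorem measurable_take (N : ℕ) : Measurable (take (r := r) N) :=
  measurable_pi_lambda _ fun i => (measurable_pi_apply (i : ℕ)).comp measurable_subtype_coe

theorem preimage_take_singleton (N : ℕ) (ξ : FBoundary r) :
    take N ⁻¹' {take N ξ} = fcyl N ξ.1 := by
  ext η
  simp [take, fcyl, funext_iff, Fin.forall_iff]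

theorem preimage_image_take {N : ℕ} {T : Set (FBoundary r)}
    (hT : ∀ ξ ∈ T, fcyl N ξ.1 ⊆ T) : take N ⁻¹' (take N '' T) = T := by
  refine subset_antisymm ?_ (Set.subset_preimage_image _ _)
  rintro η ⟨ξ, hξ, hηξ⟩
  exact hT ξ hξ (by rw [← preimage_take_singleton]; exact hηξ.symm)

theorem fcyl_mono {m M : ℕ} (h : m ≤ M) (v : ℕ → FGen r) : fcyl M v ⊆ fcyl m v :=
  fun _ hξ i hi => hξ i (lt_of_lt_of_le hi h)

theorem measurableSet_of_forall_fcyl_subset {N : ℕ} {T : Set (FBoundary r)}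
    (hT : ∀ ξ ∈ T, fcyl N ξ.1 ⊆ T) : MeasurableSet T := by
  rw [← preimage_image_take hT]
  exact measurable_take N (Set.toFinite _).measurableSet

theorem measurableSet_fcyl (m : ℕ) (v : ℕ → FGen r) : MeasurableSet (fcyl m v) :=
  measurableSet_of_forall_fcyl_subset fun _ hξ _ hη i hi => (hη i hi).trans (hξ i hi)

theorem measure_eq_mul_of_forall_fcyl_subset {μ ν : Measure (FBoundary r)} {c : ℝ≥0∞} {N : ℕ}
    {T : Set (FBoundary r)} (hT : ∀ ξ ∈ T, fcyl N ξ.1 ⊆ T)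
    (h : ∀ ξ ∈ T, μ (fcyl N ξ.1) = c * ν (fcyl N ξ.1)) : μ T = c * ν T :=
  measure_eq_mul_of_preimage_image_eq (fun b => measurable_take N (measurableSet_singleton b))
    (preimage_image_take hT) (by simpa only [preimage_take_singleton] using h)

theorem exists_forall_fcyl_subset_of_mem_measurableCylinders {t : Set (ℕ → FGen r)}
    (ht : t ∈ measurableCylinders fun _ => FGen r) :
    ∃ N, ∀ ξ ∈ (Subtype.val ⁻¹' t : Set (FBoundary r)), fcyl N ξ.1 ⊆ Subtype.val ⁻¹' t := by
  obtain ⟨I, E, -, rfl⟩ := (mem_measurableCylinders t).1 ht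
  obtain ⟨N, hN⟩ := I.exists_nat_subset_range
  refine ⟨N, fun ξ hξ η hη => ?_⟩
  have : I.restrict η.1 = I.restrict ξ.1 := funext fun i => hη i (Finset.mem_range.1 (hN i.2))
  change I.restrict η.1 ∈ E
  rwa [this]

theorem generateFrom_preimage_measurableCylinders :
    (inferInstance : MeasurableSpace (FBoundary r)) = MeasurableSpace.generateFrom
      {s | ∃ t ∈ measurableCylinders fun _ => FGen r, Subtype.val ⁻¹' t = s} := by
  change MeasurableSpace.comap Subtype.val MeasurableSpace.pi = _
  rw [← generateFrom_measurableCylinders, MeasurableSpace.comap_generateFrom]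
  rfl

theorem restrict_eq_smul_of_fcyl {μ ν : Measure (FBoundary r)} [IsFiniteMeasure μ] {c : ℝ≥0}
    {N : ℕ} {S : Set (FBoundary r)} (hS : ∀ ξ ∈ S, fcyl N ξ.1 ⊆ S)
    (h : ∀ ξ ∈ S, ∀ m, N ≤ m → μ (fcyl m ξ.1) = c * ν (fcyl m ξ.1)) :
    μ.restrict S = (c • ν).restrict S := by
  have hsat : ∀ T M, (∀ ξ ∈ T, fcyl M ξ.1 ⊆ T) → μ.restrict S T = (c • ν).restrict S T := by
    intro T M hT
    have hTS : ∀ ξ ∈ T ∩ S, fcyl (max M N) ξ.1 ⊆ T ∩ S := fun ξ hξ =>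
      Set.subset_inter ((fcyl_mono (le_max_left M N) _).trans (hT ξ hξ.1))
        ((fcyl_mono (le_max_right M N) _).trans (hS ξ hξ.2))
    rw [Measure.restrict_apply (measurableSet_of_forall_fcyl_subset hT),
      Measure.restrict_apply (measurableSet_of_forall_fcyl_subset hT), Measure.smul_apply,
      ENNReal.smul_def, smul_eq_mul]
    exact measure_eq_mul_of_forall_fcyl_subset hTS fun ξ hξ => h ξ hξ.2 _ (le_max_right M N)
  refine ext_of_generate_finite _ generateFrom_preimage_measurableCylinders
    (isPiSystem_measurableCylinders.comap Subtype.val) ?_ (hsat _ 0 fun _ _ _ _ => trivial)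
  rintro _ ⟨t, ht, rfl⟩
  obtain ⟨M, hM⟩ := exists_forall_fcyl_subset_of_mem_measurableCylinders ht
  exact hsat _ M hM

def splice (ξ η : FBoundary r) (p q : ℕ) (h : ξ.1 p = η.1 q) : FBoundary r :=
  ⟨fun j => if j ≤ p then ξ.1 j else η.1 (j - p + q), by
    intro j
    rcases lt_trichotomy (j + 1) (p + 1) with hj | hj | hj
    · simpa [show j + 1 ≤ p by omega, show j ≤ p by omega] using ξ.2 j
    · obtain rfl : j = p := by omega
      simp only [le_refl, if_true, show ¬j + 1 ≤ j by omega, if_false, h,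
        show j + 1 - j + q = q + 1 by omega]
      exact η.2 q
    · simpa [show ¬j + 1 ≤ p by omega, show ¬j ≤ p by omega,
        show j + 1 - p + q = j - p + q + 1 by omega] using η.2 (j - p + q)⟩

theorem splice_apply (ξ η : FBoundary r) (p q : ℕ) (h : ξ.1 p = η.1 q) (j : ℕ) :
    (splice ξ η p q h).1 j = if j ≤ p then ξ.1 j else η.1 (j - p + q) :=
  rfl

end FBoundary

open FBoundary

section BoundaryAction

variable {r n k : ℕ} {w : ℕ → FGen r} {g ginv : FBoundary r → FBoundary r}

def exactCancelSet (n k : ℕ) (w : ℕ → FGen r) : Set (FBoundary r) :=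
  {ξ | (∀ i, i < k → invGen (ξ.1 i) = w (n - 1 - i)) ∧ (k < n → ξ.1 k ≠ invGen (w (n - 1 - k)))}

theorem fcyl_subset_exactCancelSet {ξ : FBoundary r} (hξ : ξ ∈ exactCancelSet n k w) :
    fcyl (k + 1) ξ.1 ⊆ exactCancelSet n k w := by
  intro η hη
  refine ⟨fun i hi => ?_, fun hk => ?_⟩
  · rw [hη i (by omega)]; exact hξ.1 i hi
  · rw [hη k (by omega)]; exact hξ.2 hk

theorem preimage_fcyl_of_mem_exactCancelSet (hinv₁ : Function.LeftInverse ginv g)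
    (hinv₂ : Function.RightInverse ginv g)
    (hgact : ∀ ξ ∈ exactCancelSet n k w,
      ∀ i, (g ξ).1 i = if i < n - k then w i else ξ.1 (i - (n - k) + k))
    {ξ : FBoundary r} (hξ : ξ ∈ exactCancelSet n k w) {m : ℕ} (hm : k < m) :
    ginv ⁻¹' fcyl m ξ.1 = fcyl (m - k + (n - k)) (g ξ).1 := by
  have hS : fcyl m ξ.1 ⊆ exactCancelSet n k w :=
    (fcyl_mono hm _).trans (fcyl_subset_exactCancelSet hξ)
  ext η
  constructor
  · intro hη i hi
    rw [← hinv₂ η, hgact _ (hS hη), hgact _ hξ]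
    split_ifs
    · rfl
    · exact hη _ (by omega)
  · intro (hη : ∀ i, i < m - k + (n - k) → η.1 i = (g ξ).1 i)
    have hlink : ξ.1 (m - 1) = η.1 (m - 1 - k + (n - k)) := by
      rw [hη (m - 1 - k + (n - k)) (by omega), hgact _ hξ,
        if_neg (show ¬m - 1 - k + (n - k) < n - k by omega)]
      exact congrArg ξ.1 (by omega)
    set x := splice ξ η (m - 1) (m - 1 - k + (n - k)) hlink
    have hx : x ∈ fcyl m ξ.1 := fun i hi => by simp [x, splice_apply, show i ≤ m - 1 by omega]
    have hgx : g x = η := by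
      refine Subtype.ext (funext fun i => ?_)
      rw [hgact _ (hS hx), splice_apply]
      split_ifs with h1 h2
      · rw [hη i (by omega), hgact _ hξ, if_pos h1]
      · rw [hη i (by omega), hgact _ hξ, if_neg h1]
      · exact congrArg η.1 (by omega)
    change ginv η ∈ fcyl m ξ.1
    rwa [← hgx, hinv₁ x]

theorem two_mul_cast_sub_one_pos (hr : 1 ≤ r) : (0 : ℝ) < 2 * r - 1 := by
  have : (1 : ℝ) ≤ r := by exact_mod_cast hr
  linarith

theorem map_fcyl_of_mem_exactCancelSet {ν : Measure (FBoundary r)} (hr : 1 ≤ r)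
    (hν : ∀ m : ℕ, 1 ≤ m → ∀ w : ℕ → FGen r, FReduced m w →
      ν (fcyl m w) = ENNReal.ofReal (((2 * r : ℝ))⁻¹ * ((2 * r - 1 : ℝ)) ^ (1 - (m : ℤ))))
    (hkn : k ≤ n) (hginvmeas : Measurable ginv) (hinv₁ : Function.LeftInverse ginv g)
    (hinv₂ : Function.RightInverse ginv g)
    (hgact : ∀ ξ ∈ exactCancelSet n k w,
      ∀ i, (g ξ).1 i = if i < n - k then w i else ξ.1 (i - (n - k) + k))
    {ξ : FBoundary r} (hξ : ξ ∈ exactCancelSet n k w) {m : ℕ} (hm : k < m) :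
    ν.map ginv (fcyl m ξ.1) =
      ((2 * r - 1 : ℝ) ^ (2 * (k : ℤ) - n)).toNNReal * ν (fcyl m ξ.1) := by
  have hpos := two_mul_cast_sub_one_pos hr
  rw [Measure.map_apply hginvmeas (measurableSet_fcyl m ξ.1),
    preimage_fcyl_of_mem_exactCancelSet hinv₁ hinv₂ hgact hξ hm,
    hν _ (by omega) _ fun i _ => (g ξ).2 i, hν m (by omega) _ fun i _ => ξ.2 i,
    ← ENNReal.ofReal, ← ENNReal.ofReal_mul (zpow_nonneg hpos.le _),
    show (1 : ℤ) - ↑(m - k + (n - k)) = (2 * k - n) + (1 - m) by omega,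
    zpow_add₀ hpos.ne']
  ring_nf

end BoundaryAction

theorem free_boundary_rnDeriv_general (r : ℕ) (hr : 2 ≤ r)
    (ν : Measure (FBoundary r)) [IsProbabilityMeasure ν]
    (hν : ∀ m : ℕ, 1 ≤ m → ∀ w : ℕ → FGen r, FReduced m w →
      ν (fcyl m w) = ENNReal.ofReal (((2 * r : ℝ))⁻¹ * ((2 * r - 1 : ℝ)) ^ (1 - (m : ℤ))))
    (n k : ℕ) (hkn : k ≤ n) (w : ℕ → FGen r)
    (g ginv : FBoundary r → FBoundary r)
    (hginvmeas : Measurable ginv)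
    (hinv₁ : Function.LeftInverse ginv g) (hinv₂ : Function.RightInverse ginv g)
    (hgact : ∀ ξ : FBoundary r,
      (∀ i, i < k → invGen (ξ.1 i) = w (n - 1 - i)) →
      (k < n → ξ.1 k ≠ invGen (w (n - 1 - k))) →
      ∀ i, (g ξ).1 i = if i < n - k then w i else ξ.1 (i - (n - k) + k)) :
    ∀ᵐ ξ ∂ν,
      ((∀ i, i < k → invGen (ξ.1 i) = w (n - 1 - i)) ∧
        (k < n → ξ.1 k ≠ invGen (w (n - 1 - k)))) →
      (((ν.map ginv).rnDeriv ν) ξ).toReal = (2 * r - 1 : ℝ) ^ (2 * (k : ℤ) - n) := by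
  have hS : ∀ ξ ∈ exactCancelSet n k w, fcyl (k + 1) ξ.1 ⊆ exactCancelSet n k w :=
    fun _ => fcyl_subset_exactCancelSet
  have hrestrict := restrict_eq_smul_of_fcyl hS fun ξ hξ m hm =>
    map_fcyl_of_mem_exactCancelSet (by omega) hν hkn hginvmeas hinv₁ hinv₂
      (fun ξ hξ => hgact ξ hξ.1 hξ.2) hξ hm
  filter_upwards [Measure.rnDeriv_eq_of_restrict_eq_smul
    (measurableSet_of_forall_fcyl_subset hS) hrestrict] with ξ hξ hmem
  rw [hξ hmem, ENNReal.coe_toReal,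
    Real.coe_toNNReal _ (zpow_nonneg (two_mul_cast_sub_one_pos (by omega)).le _)]

/-- Radon–Nikodym derivative of the boundary action of the free group:
if `g = t₁⋯t_n` is reduced and `k ≤ n` is the largest number such that
`ξᵢ⁻¹ = t_{n+1−i}` for all `i ≤ k` (the amount of cancellation of `g` against `ξ`),
then `(d(ν∘g)/dν)(ξ) = (2r−1)^{2k−n}`; in particular, with `λ = (2r−1)⁻¹`, the cocycle
`R_λ(g,ξ) = 2k−n` is integer valued.  Here ν is the measure giving each length-m
cylinder of reduced words mass `(2r)⁻¹(2r−1)^{−m+1}`, `g : FBoundary r → FBoundary r`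
is the boundary action of the word `w` (with two-sided inverse `ginv`), and
`ν∘g = ν ∘ (image of g) = (ginv)_*ν`. -/
theorem free_boundary_rnDeriv (r : ℕ) (hr : 2 ≤ r)
    (ν : Measure (FBoundary r)) [IsProbabilityMeasure ν]
    (hν : ∀ m : ℕ, 1 ≤ m → ∀ w : ℕ → FGen r, FReduced m w →
      ν (fcyl m w) = ENNReal.ofReal (((2 * r : ℝ))⁻¹ * ((2 * r - 1 : ℝ)) ^ (1 - (m : ℤ))))
    (n k : ℕ) (hkn : k ≤ n) (w : ℕ → FGen r) (hw : FReduced n w)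
    (g ginv : FBoundary r → FBoundary r)
    (hgmeas : Measurable g) (hginvmeas : Measurable ginv)
    (hinv₁ : Function.LeftInverse ginv g) (hinv₂ : Function.RightInverse ginv g)
    (hgact : ∀ ξ : FBoundary r,
      (∀ i, i < k → invGen (ξ.1 i) = w (n - 1 - i)) →
      (k < n → ξ.1 k ≠ invGen (w (n - 1 - k))) →
      ∀ i, (g ξ).1 i = if i < n - k then w i else ξ.1 (i - (n - k) + k)) :
    ∀ᵐ ξ ∂ν,
      ((∀ i, i < k → invGen (ξ.1 i) = w (n - 1 - i)) ∧
        (k < n → ξ.1 k ≠ invGen (w (n - 1 - k)))) →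
      (((ν.map ginv).rnDeriv ν) ξ).toReal = (2 * r - 1 : ℝ) ^ (2 * (k : ℤ) - n) :=
  free_boundary_rnDeriv_general r hr ν hν n k hkn w g ginv hginvmeas hinv₁ hinv₂ hgact
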